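/- Let ω : [0, R) → [0, ∞) be a non-negative absolutely continuous function and let n ∈ (0, ∞). Then there exists a set S ⊂ [0, R) such that S ∩ (0, δ) has positive Lebesgue measure for every δ ∈ (0, R), and r ω′(r) ≤ n ω(r) + rⁿ for all r ∈ S. -/

import Mathlib

open MeasureTheory Metric Set Filter Topology
open scoped ENNReal NNReal

noncomputable section

/-- Euclidean `n`-space. -/
abbrev En (n : ℕ) : Type := EuclideanSpace ℝ (Fin n)

/-- `Df` is a weak differential of `f` on the set `Ω`, in the sense of
integration by parts against smooth test functions compactly supported in `Ω`. -/
def IsWeakFDerivOn {n : ℕ} {F : Type} [NormedAddCommGroup F] [NormedSpace ℝ F]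
    (Ω : Set (En n)) (f : En n → F) (Df : En n → (En n →L[ℝ] F)) : Prop :=
  AEStronglyMeasurable f (volume.restrict Ω) ∧
  AEStronglyMeasurable Df (volume.restrict Ω) ∧
  ∀ φ : En n → ℝ, ContDiff ℝ (⊤ : ℕ∞) φ → HasCompactSupport φ → tsupport φ ⊆ Ω →
    ∀ v : En n,
      ∫ x in Ω, fderiv ℝ φ x v • f x = - ∫ x in Ω, φ x • (Df x v)

/-- `f`, with weak differential `Df`, lies in the Sobolev space `W^{1,p}(A)`. -/
def MemW1p {n : ℕ} {F : Type} [NormedAddCommGroup F] [NormedSpace ℝ F]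
    (A : Set (En n)) (p : ℝ≥0∞) (f : En n → F) (Df : En n → (En n →L[ℝ] F)) : Prop :=
  IsWeakFDerivOn A f Df ∧ MemLp f p (volume.restrict A) ∧
    MemLp Df p (volume.restrict A)

/-- `f`, with weak differential `Df`, lies in the local Sobolev space `W^{1,p}_loc(Ω)`. -/
def MemW1pLoc {n : ℕ} {F : Type} [NormedAddCommGroup F] [NormedSpace ℝ F]
    (Ω : Set (En n)) (p : ℝ≥0∞) (f : En n → F) (Df : En n → (En n →L[ℝ] F)) : Prop :=
  IsWeakFDerivOn Ω f Df ∧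
  ∀ C : Set (En n), C ⊆ Ω → IsCompact C →
    MemLp f p (volume.restrict C) ∧ MemLp Df p (volume.restrict C)

/-- A scalar function lies in `L^p_loc(Ω)`. -/
def MemLpLoc {n : ℕ} (Ω : Set (En n)) (p : ℝ≥0∞) (u : En n → ℝ) : Prop :=
  ∀ C : Set (En n), C ⊆ Ω → IsCompact C → MemLp u p (volume.restrict C)

/-- `f` has a value of finite distortion at `y₀` with data `(K, Σ)` on `Ω`:
`|Df|ⁿ ≤ K J_f + Σ |f - y₀|ⁿ` almost everywhere on `Ω`. -/
def HasFDValueAt {n : ℕ} (Ω : Set (En n)) (f : En n → En n)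
    (Df : En n → (En n →L[ℝ] En n)) (y₀ : En n) (K Sig : En n → ℝ) : Prop :=
  ∀ᵐ x ∂(volume.restrict Ω),
    ‖Df x‖ ^ n ≤ K x * (Df x).det + Sig x * ‖f x - y₀‖ ^ n

/-- `f` satisfies the `(K, Σ)`-distortion inequality with defect on `Ω`:
`|Df|ⁿ ≤ K J_f + Σ` almost everywhere on `Ω`. -/
def DistortionWithDefect {n : ℕ} (Ω : Set (En n)) (f : En n → En n)
    (Df : En n → (En n →L[ℝ] En n)) (K Sig : En n → ℝ) : Prop :=
  ∀ᵐ x ∂(volume.restrict Ω), ‖Df x‖ ^ n ≤ K x * (Df x).det + Sig x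

/-- The Lusin (N)-property on `Ω`. -/
def LusinN {n : ℕ} (Ω : Set (En n)) (f : En n → En n) : Prop :=
  ∀ E : Set (En n), E ⊆ Ω → volume E = 0 → volume (f '' E) = 0

/-- `d` is a degree function for `f` on `U` (with Jacobian `Jf`): an integer-valued
locally constant function on `ℝⁿ ∖ f(∂U)` satisfying the degree identity
`∫_U (v ∘ f) J_f = ∫_{ℝⁿ ∖ f(∂U)} v(y) d(y) dy` for all bounded measurable `v`. -/
def IsDegreeFun {n : ℕ} (f : En n → En n) (Jf : En n → ℝ) (U : Set (En n))
    (d : En n → ℤ) : Prop :=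
  ContinuousOn (fun y => (d y : ℝ)) ((f '' frontier U)ᶜ) ∧
  ∀ v : En n → ℝ, Measurable v → (∃ M : ℝ, ∀ y, |v y| ≤ M) →
    ∫ x in U, v (f x) * Jf x = ∫ y in ((f '' frontier U)ᶜ), v y * (d y : ℝ)

/-- `deg(f, U) = dU`, where `U` is a component of `f⁻¹(B(y₀, ε))`: a degree function
of `f` on `U` takes the constant value `dU` on `B(y₀, ε)`. -/
def DegEq {n : ℕ} (f : En n → En n) (Jf : En n → ℝ) (U : Set (En n))
    (y₀ : En n) (ε : ℝ) (dU : ℤ) : Prop :=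
  ∃ d : En n → ℤ, IsDegreeFun f Jf U d ∧ ∀ y ∈ ball y₀ ε, d y = dU

/-- The local index `i(x₀, f)` equals `ι`: for every open `U` compactly contained in `Ω`
with `U ∩ f⁻¹{f(x₀)} = {x₀}`, every degree function of `f` on `U` takes the value `ι`
at `f(x₀)`. -/
def LocalIndexEq {n : ℕ} (Ω : Set (En n)) (f : En n → En n) (Jf : En n → ℝ)
    (x₀ : En n) (ι : ℤ) : Prop :=
  ∀ U : Set (En n), IsOpen U → x₀ ∈ U → closure U ⊆ Ω → IsCompact (closure U) →
    {x ∈ U | f x = f x₀} = {x₀} →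
    ∀ d : En n → ℤ, IsDegreeFun f Jf U d → d (f x₀) = ι

/-- The sphere component `g_{S^{n-1}}` of the spherical logarithm of `f` at `y₀`. -/
def sphLogS {n : ℕ} (f : En n → En n) (y₀ : En n) (x : En n) : En n :=
  ‖f x - y₀‖⁻¹ • (f x - y₀)

/-- The differential of the spherical logarithm `g = (g_ℝ, g_{S^{n-1}})`, at a point
with sphere coordinate `y`, identified with a linear map `ℝⁿ → ℝⁿ` via the conformal
map `(t, y) ↦ eᵗ y`: it is `v ↦ (Dg_ℝ v) • y + Dg_S v`.  Its operator norm is `|Dg|`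
and its determinant is the Jacobian `J_g` of the spherical logarithm. -/
def sphDiff {n : ℕ} (DgR : En n →L[ℝ] ℝ) (DgS : En n →L[ℝ] En n) (y : En n) :
    En n →L[ℝ] En n :=
  DgR.smulRight y + DgS

/-- `u`, with weak differential `Du`, lies in `W^{1,p}_0(B)`: it is a `W^{1,p}` function
approximable in `W^{1,p}`-norm by smooth functions compactly supported in `B`. -/
def MemW1pZero {n : ℕ} (B : Set (En n)) (p : ℝ≥0∞) (u : En n → ℝ)
    (Du : En n → (En n →L[ℝ] ℝ)) : Prop :=
  MemW1p B p u Du ∧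
  ∀ ε : ℝ, 0 < ε → ∃ ψ : En n → ℝ, ContDiff ℝ (⊤ : ℕ∞) ψ ∧ HasCompactSupport ψ ∧
    tsupport ψ ⊆ B ∧
    (eLpNorm (fun x => u x - ψ x) p (volume.restrict B)).toReal +
      (eLpNorm (fun x => Du x - fderiv ℝ ψ x) p (volume.restrict B)).toReal < ε

/-- `u` is `α`-almost weakly monotone on `Ω` with constant `C`. -/
def AlmostWeaklyMonotone {n : ℕ} (Ω : Set (En n)) (u : En n → ℝ) (C α : ℝ) : Prop :=
  ∀ (x : En n) (r : ℝ), 0 < r → closedBall x r ⊆ Ω →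
    (∀ M : ℝ, (∃ Du, MemW1pZero (ball x r) 1 (fun y => max (u y - M) 0) Du) →
      ∀ᵐ y ∂(volume.restrict (ball x r)), max (u y - M) 0 ≤ C * r ^ α) ∧
    (∀ m : ℝ, (∃ Du, MemW1pZero (ball x r) 1 (fun y => max (m - u y) 0) Du) →
      ∀ᵐ y ∂(volume.restrict (ball x r)), max (m - u y) 0 ≤ C * r ^ α)

/-- The essential oscillation of `f` on `B`. -/
def essOsc {n m : ℕ} (B : Set (En n)) (f : En n → En m) : ℝ≥0∞ :=
  ⨅ (N : Set (En n)) (_ : volume N = 0),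
    ⨆ x ∈ B \ N, ⨆ y ∈ B \ N, edist (f x) (f y)

private lemma stmt6_parts (n : ℝ) (hn : 0 < n) (ω ω' : ℝ → ℝ) (a b : ℝ)
    (ha : 0 < a) (hab : a ≤ b)
    (hω'int : IntegrableOn ω' (Icc a b))
    (hFTC : ∀ s ∈ Icc a b, ω s - ω a = ∫ t in a..s, ω' t) :
    IntegrableOn (fun t => ω' t * t ^ (-n) + ω t * (-n * t ^ (-n - 1))) (Ioc a b) ∧
    ω b * b ^ (-n) - ω a * a ^ (-n)
      = ∫ t in Ioc a b, (ω' t * t ^ (-n) + ω t * (-n * t ^ (-n - 1))) := by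
  refine ?main
  case main => ?_
  have haI : a ∈ Icc a b := ⟨le_refl a, hab⟩
  have hbI : b ∈ Icc a b := ⟨hab, le_refl b⟩
  set g : ℝ → ℝ := fun t => t ^ (-n) with hg
  set g' : ℝ → ℝ := fun t => -n * t ^ (-n - 1) with hg'
  have hpos : ∀ t ∈ Icc a b, (0:ℝ) < t := fun t ht => lt_of_lt_of_le ha ht.1
  have hgderiv : ∀ t ∈ Icc a b, HasDerivAt g (g' t) t := by
    intro t ht
    simpa [hg, hg'] using Real.hasDerivAt_rpow_const (x := t) (p := -n)
      (Or.inl (hpos t ht).ne')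
  have hg'c : ContinuousOn g' (Icc a b) :=
    continuousOn_const.mul (ContinuousOn.rpow_const continuousOn_id
      fun t ht => Or.inl (hpos t ht).ne')
  have hgc : ContinuousOn g (Icc a b) :=
    ContinuousOn.rpow_const continuousOn_id fun t ht => Or.inl (hpos t ht).ne'
  -- FTC for g
  have hgFTC : ∀ t ∈ Icc a b, ∫ s in t..b, g' s = g b - g t := by
    intro t ht
    apply intervalIntegral.integral_eq_sub_of_hasDerivAt
    · intro s hs
      rw [uIcc_of_le ht.2] at hs
      exact hgderiv s ⟨le_trans ht.1 hs.1, hs.2⟩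
    · apply ContinuousOn.intervalIntegrable
      rw [uIcc_of_le ht.2]
      exact hg'c.mono (Icc_subset_Icc ht.1 le_rfl)
  -- primitive of ω'
  set P : ℝ → ℝ := fun s => ∫ t in Ioc a s, ω' t with hP
  have hPc : ContinuousOn P (Icc a b) := intervalIntegral.continuousOn_primitive hω'int
  have hωeq : ∀ s ∈ Icc a b, ω s = ω a + P s := by
    intro s hs
    have h1 := hFTC s hs
    rw [intervalIntegral.integral_of_le hs.1] at h1
    simp only [hP]
    linarith
  have hωc : ContinuousOn ω (Icc a b) :=
    (continuousOn_const.add hPc).congr fun s hs => hωeq s hs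
  have hω'Ioc : IntegrableOn ω' (Ioc a b) := hω'int.mono_set Ioc_subset_Icc_self
  -- bounds for g, g' on Ioc a b
  have hgbd : ∀ t ∈ Ioc a b, ‖g t‖ ≤ a ^ (-n) := by
    intro t ht
    have h0 : (0:ℝ) < t := lt_trans ha ht.1
    rw [Real.norm_eq_abs, abs_of_nonneg (Real.rpow_nonneg h0.le _)]
    exact Real.rpow_le_rpow_of_nonpos ha ht.1.le (by linarith)
  have hg'bd : ∀ t ∈ Ioc a b, ‖g' t‖ ≤ n * a ^ (-n - 1) := by
    intro t ht
    have h0 : (0:ℝ) < t := lt_trans ha ht.1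
    have : ‖g' t‖ = n * t ^ (-n - 1) := by
      rw [hg', Real.norm_eq_abs, abs_mul, abs_neg, abs_of_pos hn,
        abs_of_nonneg (Real.rpow_nonneg h0.le _)]
    rw [this]
    exact mul_le_mul_of_nonneg_left
      (Real.rpow_le_rpow_of_nonpos ha ht.1.le (by linarith)) hn.le
  -- integrability of pieces
  have hIω'g : IntegrableOn (fun t => ω' t * g t) (Ioc a b) := by
    apply Integrable.mono' (hω'Ioc.norm.mul_const (a ^ (-n)))
    · exact hω'Ioc.aestronglyMeasurable.mul
        ((hgc.mono Ioc_subset_Icc_self).aestronglyMeasurable measurableSet_Ioc)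
    · filter_upwards [ae_restrict_mem measurableSet_Ioc] with t ht
      rw [norm_mul]
      exact mul_le_mul_of_nonneg_left (hgbd t ht) (norm_nonneg _)
  have hIωg' : IntegrableOn (fun t => ω t * g' t) (Ioc a b) :=
    ((hωc.mul hg'c).integrableOn_Icc).mono_set Ioc_subset_Icc_self
  have hIPg' : IntegrableOn (fun s => P s * g' s) (Ioc a b) :=
    ((hPc.mul hg'c).integrableOn_Icc).mono_set Ioc_subset_Icc_self
  have hIg' : IntegrableOn g' (Ioc a b) :=
    hg'c.integrableOn_Icc.mono_set Ioc_subset_Icc_self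
  have hIg'const : IntegrableOn (fun s => ω a * g' s) (Ioc a b) := hIg'.const_mul _
  have hintg' : ∫ s in Ioc a b, g' s = g b - g a := by
    rw [← intervalIntegral.integral_of_le hab]
    exact hgFTC a haI
  -- total integral of ω'
  have hintω' : ∫ t in Ioc a b, ω' t = ω b - ω a := by
    rw [← intervalIntegral.integral_of_le hab]
    exact (hFTC b hbI).symm
  -- Fubini swap
  set F : ℝ → ℝ → ℝ := fun s t => if t ≤ s then ω' t * g' s else 0 with hF
  have hFunc : Function.uncurry F =
      ({z : ℝ × ℝ | z.2 ≤ z.1}).indicator (fun z => ω' z.2 * g' z.1) := by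
    funext z
    simp only [Function.uncurry, hF, Set.indicator_apply, mem_setOf_eq]
  have hFint : Integrable (Function.uncurry F)
      ((volume.restrict (Ioc a b)).prod (volume.restrict (Ioc a b))) := by
    rw [hFunc]
    have hSmeas : MeasurableSet {z : ℝ × ℝ | z.2 ≤ z.1} :=
      measurableSet_le measurable_snd measurable_fst
    have haesm : AEStronglyMeasurable (fun z : ℝ × ℝ => ω' z.2 * g' z.1) ((volume.restrict (Ioc a b)).prod (volume.restrict (Ioc a b))) :=
      hω'Ioc.aestronglyMeasurable.comp_snd.mul
        (((hg'c.mono Ioc_subset_Icc_self).aestronglyMeasurable measurableSet_Ioc).comp_fst)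
    have hbound : Integrable (fun z : ℝ × ℝ => (n * a ^ (-n - 1)) * ‖ω' z.2‖) ((volume.restrict (Ioc a b)).prod (volume.restrict (Ioc a b))) :=
      Integrable.mul_prod (integrable_const _) hω'Ioc.norm
    apply Integrable.mono' hbound (haesm.indicator hSmeas)
    have hmemae : ∀ᵐ z ∂((volume.restrict (Ioc a b)).prod (volume.restrict (Ioc a b))),
        z ∈ (Ioc a b) ×ˢ (Ioc a b) := by
      rw [Measure.prod_restrict]
      exact ae_restrict_mem (measurableSet_Ioc.prod measurableSet_Ioc)
    filter_upwards [hmemae] with z hz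
    have h1 : ‖({z : ℝ × ℝ | z.2 ≤ z.1}).indicator (fun z => ω' z.2 * g' z.1) z‖
        ≤ ‖ω' z.2 * g' z.1‖ := norm_indicator_le_norm_self _ _
    refine h1.trans ?_
    rw [norm_mul, mul_comm]
    exact mul_le_mul_of_nonneg_right (hg'bd z.1 hz.1) (norm_nonneg _)
  have hswap := MeasureTheory.integral_integral_swap hFint
  have hLHS : (∫ s in Ioc a b, ∫ t in Ioc a b, F s t) = ∫ s in Ioc a b, P s * g' s := by
    apply setIntegral_congr_fun measurableSet_Ioc
    intro s hs
    show (∫ t in Ioc a b, F s t) = P s * g' s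
    have h1 : (fun t => F s t) = (Iic s).indicator (fun t => ω' t * g' s) := by
      funext t
      simp only [hF, Set.indicator_apply, mem_Iic]
    rw [h1, setIntegral_indicator measurableSet_Iic, Ioc_inter_Iic,
      min_eq_right hs.2, integral_mul_const]
  have hRHS : (∫ t in Ioc a b, ∫ s in Ioc a b, F s t) = ∫ t in Ioc a b, ω' t * (g b - g t) := by
    apply setIntegral_congr_fun measurableSet_Ioc
    intro t ht
    show (∫ s in Ioc a b, F s t) = ω' t * (g b - g t)
    have h1 : (fun s => F s t) = (Ici t).indicator (fun s => ω' t * g' s) := by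
      funext s
      simp only [hF, Set.indicator_apply, mem_Ici]
    have h2 : Ioc a b ∩ Ici t = Icc t b := by
      ext s
      simp only [mem_inter_iff, mem_Ioc, mem_Ici, mem_Icc]
      constructor
      · rintro ⟨⟨_, h4⟩, h5⟩; exact ⟨h5, h4⟩
      · rintro ⟨h4, h5⟩; exact ⟨⟨lt_of_lt_of_le ht.1 h4, h5⟩, h4⟩
    rw [h1, setIntegral_indicator measurableSet_Ici, h2, integral_const_mul,
      integral_Icc_eq_integral_Ioc, ← intervalIntegral.integral_of_le ht.2,
      hgFTC t (Ioc_subset_Icc_self ht)]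
  have hswap' : ∫ s in Ioc a b, P s * g' s = ∫ t in Ioc a b, ω' t * (g b - g t) := by
    rw [← hLHS, ← hRHS]; exact hswap
  -- compute ∫ ω g'
  have hT : ∫ s in Ioc a b, ω s * g' s
      = ω a * (g b - g a) + ∫ t in Ioc a b, ω' t * (g b - g t) := by
    have h1 : ∀ s ∈ Ioc a b, ω s * g' s = ω a * g' s + P s * g' s := by
      intro s hs
      rw [hωeq s (Ioc_subset_Icc_self hs)]; ring
    rw [setIntegral_congr_fun measurableSet_Ioc h1, integral_add hIg'const hIPg',
      integral_const_mul, hintg', hswap']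
  -- expand ∫ ω' (g b - g)
  have hT2 : ∫ t in Ioc a b, ω' t * (g b - g t)
      = (ω b - ω a) * g b - ∫ t in Ioc a b, ω' t * g t := by
    have h1 : ∀ t ∈ Ioc a b, ω' t * (g b - g t) = ω' t * g b - ω' t * g t := by
      intro t _; ring
    rw [setIntegral_congr_fun measurableSet_Ioc h1,
      integral_sub (hω'Ioc.mul_const _) hIω'g, integral_mul_const, hintω']
  refine ⟨hIω'g.add hIωg', ?_⟩
  rw [integral_add hIω'g hIωg', hT, hT2]
  ring


/-- **Lemma 3.3**: if `ω : [0, R) → [0, ∞)` is absolutely continuous (encoded by the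
fundamental theorem of calculus with a locally integrable derivative `ω'`) and
`n ∈ (0, ∞)`, then there is a set `S ⊆ [0, R)` such that `S ∩ (0, δ)` has positive
measure for every `δ ∈ (0, R)` and `r ω'(r) ≤ n ω(r) + rⁿ` for all `r ∈ S`.
Here `R ∈ (0, ∞]`. -/
theorem stmt_6 (R : ℝ≥0∞) (hR : 0 < R) (n : ℝ) (hn : 0 < n)
    (ω ω' : ℝ → ℝ)
    (hω0 : ∀ r : ℝ, 0 ≤ r → ENNReal.ofReal r < R → 0 ≤ ω r)
    (hint : ∀ b : ℝ, 0 ≤ b → ENNReal.ofReal b < R → IntegrableOn ω' (Icc 0 b))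
    (hFTC : ∀ a b : ℝ, 0 ≤ a → a ≤ b → ENNReal.ofReal b < R →
      ω b - ω a = ∫ t in a..b, ω' t) :
    ∃ S : Set ℝ, (∀ r ∈ S, 0 ≤ r ∧ ENNReal.ofReal r < R) ∧
      (∀ δ : ℝ, 0 < δ → ENNReal.ofReal δ < R → 0 < volume (S ∩ Ioo 0 δ)) ∧
      ∀ r ∈ S, r * ω' r ≤ n * ω r + r ^ n := by
  classical
  refine ⟨{r | 0 ≤ r ∧ ENNReal.ofReal r < R ∧ r * ω' r ≤ n * ω r + r ^ n},
    fun r hr => ⟨hr.1, hr.2.1⟩, ?_, fun r hr => hr.2.2⟩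
  intro δ hδ hδR
  by_contra hzero
  rw [not_lt, nonpos_iff_eq_zero] at hzero
  have hRle : ∀ s : ℝ, s ≤ δ → ENNReal.ofReal s < R := fun s hs =>
    lt_of_le_of_lt (ENNReal.ofReal_le_ofReal hs) hδR
  set b := δ / 2 with hb_def
  have hb0 : 0 < b := by positivity
  have hbδ : b < δ := by rw [hb_def]; linarith
  have hωb : 0 ≤ ω b := hω0 b hb0.le (hRle b hbδ.le)
  have hXnn : 0 ≤ ω b * b ^ (-n) := mul_nonneg hωb (Real.rpow_nonneg hb0.le _)
  set a := b * Real.exp (-(ω b * b ^ (-n) + 1)) with ha_def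
  have ha0 : 0 < a := mul_pos hb0 (Real.exp_pos _)
  have hab : a < b := by
    have h1 : Real.exp (-(ω b * b ^ (-n) + 1)) < 1 := by
      rw [Real.exp_lt_one_iff]; linarith
    calc a = b * Real.exp (-(ω b * b ^ (-n) + 1)) := ha_def
    _ < b * 1 := by exact mul_lt_mul_of_pos_left h1 hb0
    _ = b := mul_one b
  have hωa : 0 ≤ ω a := hω0 a ha0.le (hRle a (by linarith))
  have hparts := stmt6_parts n hn ω ω' a b ha0 hab.le
    ((hint b hb0.le (hRle b hbδ.le)).mono_set (Icc_subset_Icc ha0.le le_rfl))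
    (fun s hs => by
      have := hFTC a s ha0.le hs.1 (hRle s (le_trans hs.2 hbδ.le))
      linarith)
  -- a.e. strict inequality on Ioc a b
  have hnull : volume {t | t ∈ Ioc a b ∧ ¬ (n * ω t + t ^ n < t * ω' t)} = 0 := by
    apply measure_mono_null _ hzero
    rintro t ⟨ht, hle⟩
    have h0t : 0 < t := lt_trans ha0 ht.1
    have htδ : t < δ := lt_of_le_of_lt ht.2 hbδ
    exact ⟨⟨h0t.le, hRle t htδ.le, not_lt.mp hle⟩, h0t, htδ⟩
  have hae : ∀ᵐ t ∂(volume.restrict (Ioc a b)), n * ω t + t ^ n < t * ω' t := by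
    have h1 : ∀ᵐ t ∂volume, ¬ (t ∈ Ioc a b ∧ ¬ (n * ω t + t ^ n < t * ω' t)) := by
      rw [ae_iff]
      refine measure_mono_null ?_ hnull
      intro t ht
      simp only [mem_setOf_eq, not_not] at ht ⊢
      exact ht
    filter_upwards [ae_restrict_of_ae h1, ae_restrict_mem measurableSet_Ioc] with t h2 h3
    by_contra hc
    exact h2 ⟨h3, hc⟩
  -- pointwise bound a.e.
  have haeb : ∀ᵐ t ∂(volume.restrict (Ioc a b)),
      t⁻¹ ≤ ω' t * t ^ (-n) + ω t * (-n * t ^ (-n - 1)) := by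
    filter_upwards [hae, ae_restrict_mem measurableSet_Ioc] with t hPt htmem
    have h0t : 0 < t := lt_trans ha0 htmem.1
    have hc : (0:ℝ) < t ^ (-n - 1) := Real.rpow_pos_of_pos h0t _
    have key1 : t ^ (-n - 1) * t = t ^ (-n) := by
      have h := Real.rpow_add h0t (-n - 1) 1
      rw [Real.rpow_one] at h
      rw [← h]
      norm_num
    have key2 : t ^ (-n - 1) * t ^ n = t⁻¹ := by
      have h := Real.rpow_add h0t (-n - 1) n
      rw [← h]
      have h2 : -n - 1 + n = -1 := by ring
      rw [h2, Real.rpow_neg_one]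
    have hmul := mul_le_mul_of_nonneg_left hPt.le hc.le
    have e1 : t ^ (-n - 1) * (t * ω' t) = ω' t * t ^ (-n) := by
      rw [← key1]; ring
    have e2 : t ^ (-n - 1) * (n * ω t + t ^ n) = n * (ω t * t ^ (-n - 1)) + t⁻¹ := by
      rw [← key2]; ring
    rw [e1, e2] at hmul
    nlinarith [hmul]
  -- integrability of t⁻¹
  have hinv : IntegrableOn (fun t : ℝ => t⁻¹) (Ioc a b) := by
    have : ContinuousOn (fun t : ℝ => t⁻¹) (Icc a b) :=
      continuousOn_id.inv₀ fun t ht => (lt_of_lt_of_le ha0 ht.1).ne'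
    exact this.integrableOn_Icc.mono_set Ioc_subset_Icc_self
  have hmono : (∫ t in Ioc a b, t⁻¹)
      ≤ ∫ t in Ioc a b, (ω' t * t ^ (-n) + ω t * (-n * t ^ (-n - 1))) :=
    integral_mono_ae hinv hparts.1 haeb
  have hloginv : (∫ t in Ioc a b, t⁻¹) = Real.log (b / a) := by
    rw [← intervalIntegral.integral_of_le hab.le]
    exact integral_inv_of_pos ha0 hb0
  have hba : b / a = Real.exp (ω b * b ^ (-n) + 1) := by
    rw [ha_def, Real.exp_neg]
    field_simp
  have hlog : Real.log (b / a) = ω b * b ^ (-n) + 1 := by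
    rw [hba, Real.log_exp]
  have hfin : ω b * b ^ (-n) + 1 ≤ ω b * b ^ (-n) - ω a * a ^ (-n) := by
    rw [← hlog, ← hloginv]
    calc (∫ t in Ioc a b, t⁻¹)
        ≤ ∫ t in Ioc a b, (ω' t * t ^ (-n) + ω t * (-n * t ^ (-n - 1))) := hmono
    _ = ω b * b ^ (-n) - ω a * a ^ (-n) := hparts.2.symm
  have : 0 ≤ ω a * a ^ (-n) := mul_nonneg hωa (Real.rpow_nonneg ha0.le _)
  linarith
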